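/- Let G be a Garside group of finite type, let x ∈ G be rigid, and let s ∈ G with inf(x^s) = inf(x) and sup(x^s) = sup(x). Then for all integers i ≥ 0: (1) 1 = 𝔓₀(x^s) ≼ 𝔓₁(x^s) ≼ ⋯ ≼ 𝔓_i(x^s) ≼ 𝔓_{i+1}(x^s) ≼ Δ^{ℓ(s)}; and (2) s = s^{(0)} ≼ s^{(1)} ≼ ⋯ ≼ s^{(i)} ≼ s^{(i+1)} ≼ Δ^{sup(s)}, where s^{(i)} denotes the i-fold iterated transport of s at x. -/

import Mathlib

namespace GarsidePaper

/-- A Garside structure of finite type on a group `G`: a positive submonoid `P` with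
`P ∩ P⁻¹ = {1}`, a Garside element `Δ ∈ P`, the prefix order `a ≼ b ↔ a⁻¹b ∈ P`
a lattice order (with meet `wedge` and join `vee`), the simple elements `[1,Δ]`
generating `G` and being finite, `Δ⁻¹PΔ = P`, a finite norm on positive elements,
and the infimum and supremum functions `inf`, `sup` characterised by
`Δ^(inf x) ≼ x ≼ Δ^(sup x)` with `inf x` maximal and `sup x` minimal. -/
structure Garside (G : Type*) [Group G] where
  P : Submonoid G
  Δ : G
  purity : ∀ a : G, a ∈ P → a⁻¹ ∈ P → a = 1
  delta_mem : Δ ∈ P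
  wedge : G → G → G
  vee : G → G → G
  wedge_le_left : ∀ a b : G, (wedge a b)⁻¹ * a ∈ P
  wedge_le_right : ∀ a b : G, (wedge a b)⁻¹ * b ∈ P
  le_wedge : ∀ a b c : G, c⁻¹ * a ∈ P → c⁻¹ * b ∈ P → c⁻¹ * wedge a b ∈ P
  le_vee_left : ∀ a b : G, a⁻¹ * vee a b ∈ P
  le_vee_right : ∀ a b : G, b⁻¹ * vee a b ∈ P
  vee_le : ∀ a b c : G, a⁻¹ * c ∈ P → b⁻¹ * c ∈ P → (vee a b)⁻¹ * c ∈ P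
  simples_generate : Subgroup.closure {a : G | a ∈ P ∧ a⁻¹ * Δ ∈ P} = (⊤ : Subgroup G)
  conj_pos : ∀ a : G, a ∈ P → Δ⁻¹ * a * Δ ∈ P
  norm : G → ℕ
  norm_exists : ∀ x : G, x ∈ P → x ≠ 1 →
    ∃ l : List G, (∀ s ∈ l, s ∈ P ∧ s ≠ 1) ∧ l.prod = x ∧ l.length = norm x
  norm_max : ∀ x : G, x ∈ P → x ≠ 1 →
    ∀ l : List G, (∀ s ∈ l, s ∈ P ∧ s ≠ 1) → l.prod = x → l.length ≤ norm x
  simples_finite : Set.Finite {a : G | a ∈ P ∧ a⁻¹ * Δ ∈ P}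
  inf : G → ℤ
  sup : G → ℤ
  inf_le : ∀ x : G, (Δ ^ inf x)⁻¹ * x ∈ P
  inf_max : ∀ (x : G) (p : ℤ), (Δ ^ p)⁻¹ * x ∈ P → p ≤ inf x
  le_sup : ∀ x : G, x⁻¹ * Δ ^ sup x ∈ P
  sup_min : ∀ (x : G) (q : ℤ), x⁻¹ * Δ ^ q ∈ P → sup x ≤ q

namespace Garside

variable {G : Type*} [Group G]

/-- The prefix order `a ≼ b`. -/
def le (S : Garside G) (a b : G) : Prop := a⁻¹ * b ∈ S.P

/-- The canonical length `ℓ(x) = sup(x) - inf(x)`. -/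
def len (S : Garside G) (x : G) : ℤ := S.sup x - S.inf x

/-- The initial factor `ι(x) = (x Δ^(-inf x)) ∧ Δ`. -/
def iota (S : Garside G) (x : G) : G := S.wedge (x * S.Δ ^ (-S.inf x)) S.Δ

/-- The preferred prefix `𝔭(x) = ι(x) ∧ ι(x⁻¹)`. -/
def pp (S : Garside G) (x : G) : G := S.wedge (S.iota x) (S.iota x⁻¹)

/-- Cyclic sliding `𝔰(x) = 𝔭(x)⁻¹ x 𝔭(x)`. -/
def sl (S : Garside G) (x : G) : G := (S.pp x)⁻¹ * x * S.pp x

/-- The final factor `φ(x) = (Δ^(sup x - 1) ∧ x)⁻¹ x`. -/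
def phi (S : Garside G) (x : G) : G := (S.wedge (S.Δ ^ (S.sup x - 1)) x)⁻¹ * x

/-- Conjugation by `Δ`: `τ(x) = Δ⁻¹ x Δ`. -/
def tau (S : Garside G) (x : G) : G := S.Δ⁻¹ * x * S.Δ

/-- Cycling `c(x) = ι(x)⁻¹ x ι(x)`. -/
def cyc (S : Garside G) (x : G) : G := (S.iota x)⁻¹ * x * S.iota x

/-- Decycling `d(x) = φ(x) x φ(x)⁻¹`. -/
def dec (S : Garside G) (x : G) : G := S.phi x * x * (S.phi x)⁻¹

/-- The transport `α^{(1)} = 𝔭(x)⁻¹ α 𝔭(x^α)` of `α` at `x`. -/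
def transport (S : Garside G) (x α : G) : G := (S.pp x)⁻¹ * α * S.pp (α⁻¹ * x * α)

/-- The iterated transport: `itTransport x i α = α^{(i)}`, the transport of `α^{(i-1)}`
at `𝔰^{i-1}(x)`, with `α^{(0)} = α`. -/
def itTransport (S : Garside G) (x : G) : ℕ → G → G
  | 0, α => α
  | i + 1, α => S.transport ((S.sl)^[i] x) (S.itTransport x i α)

/-- `𝔓_i(x) = 𝔭(x) 𝔭(𝔰(x)) ⋯ 𝔭(𝔰^{i-1}(x))`, with `𝔓₀(x) = 1`. -/
def PP (S : Garside G) (x : G) : ℕ → G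
  | 0 => 1
  | i + 1 => S.PP x i * S.pp ((S.sl)^[i] x)

/-- The summit set `SS(x)`. -/
def SS (S : Garside G) (x : G) : Set G :=
  {y | IsConj x y ∧ ∀ z : G, IsConj x z → S.inf z ≤ S.inf y}

/-- The super summit set `SSS(x)`. -/
def SSS (S : Garside G) (x : G) : Set G :=
  {y | IsConj x y ∧ (∀ z : G, IsConj x z → S.inf z ≤ S.inf y) ∧
       (∀ z : G, IsConj x z → S.sup y ≤ S.sup z)}

/-- The ultra summit set `USS(x)`. -/
def USS (S : Garside G) (x : G) : Set G :=
  {y | y ∈ S.SSS x ∧ ∃ m : ℕ, 1 ≤ m ∧ (S.cyc)^[m] y = y}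

/-- The reduced super summit set `RSSS(x)`. -/
def RSSS (S : Garside G) (x : G) : Set G :=
  {y | IsConj x y ∧ (∃ m : ℕ, 1 ≤ m ∧ (S.cyc)^[m] y = y) ∧
       (∃ n : ℕ, 1 ≤ n ∧ (S.dec)^[n] y = y)}

/-- The set of sliding circuits `SC(x)`. -/
def SC (S : Garside G) (x : G) : Set G :=
  {y | IsConj x y ∧ ∃ m : ℕ, 1 ≤ m ∧ (S.sl)^[m] y = y}

/-!
Since `x` is rigid, sliding fixes it and the transport recursion reads
`s^{(i+1)} = s^{(i)} 𝔭(yᵢ)` with `yᵢ = 𝔰^i(x^s) = x^{s^{(i)}}`; hence `s^{(i)} = s 𝔓ᵢ(x^s)` and both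
chains increase. For the bound, sliding does not decrease `inf` nor increase `sup`, and for a
positive `α` with `inf(y^α) ≤ inf y`, `sup y ≤ sup(y^α)` one has `𝔭(y) ≼ α 𝔭(y^α)`. Taking
`α = (s^{(i)})⁻¹ Δ^{sup s}` turns `yᵢ` into `τ^{sup s}(x)`, which is rigid again, so
`s^{(i+1)} ≼ Δ^{sup s}`; left division by `s` then gives `𝔓_{i+1}(x^s) ≼ Δ^{ℓ(s)}`.

Conjugation by any power of `Δ` preserves `P`: conjugation by `Δ` maps the finite set of simples
into itself, so two of its powers agree there, and as the simples generate `G` some positive power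
of `Δ` is central.
-/

variable (S : Garside G)

protected lemma le_trans {a b c : G} (hab : S.le a b) (hbc : S.le b c) : S.le a c := by
  simpa [le, mul_assoc] using S.P.mul_mem hab hbc

protected lemma le_antisymm {a b : G} (hab : S.le a b) (hba : S.le b a) : a = b :=
  inv_mul_eq_one.1 (S.purity _ hab (by simpa [le] using hba))

lemma one_le_iff {a : G} : S.le 1 a ↔ a ∈ S.P := by simp [le]

lemma le_mul_of_mem (a : G) {c : G} (hc : c ∈ S.P) : S.le a (a * c) := by simpa [le] using hc

lemma mul_le_mul_left_iff (g : G) {a b : G} : S.le (g * a) (g * b) ↔ S.le a b := by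
  simp [le, mul_assoc]

lemma wedge_eq {a b c : G} (hca : S.le c a) (hcb : S.le c b)
    (h : ∀ d, S.le d a → S.le d b → S.le d c) : S.wedge a b = c :=
  S.le_antisymm (h _ (S.wedge_le_left a b) (S.wedge_le_right a b)) (S.le_wedge a b c hca hcb)

lemma wedge_comm (a b : G) : S.wedge a b = S.wedge b a :=
  S.wedge_eq (S.wedge_le_right b a) (S.wedge_le_left b a) fun d hda hdb =>
    S.le_wedge b a d hdb hda

lemma wedge_mem {a b : G} (ha : a ∈ S.P) (hb : b ∈ S.P) : S.wedge a b ∈ S.P :=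
  S.one_le_iff.1 (S.le_wedge a b 1 (S.one_le_iff.2 ha) (S.one_le_iff.2 hb))

lemma map_wedge (f : G ≃ G) (hf : ∀ a b, S.le (f a) (f b) ↔ S.le a b) (a b : G) :
    f (S.wedge a b) = S.wedge (f a) (f b) := by
  refine (S.wedge_eq ((hf _ _).2 (S.wedge_le_left a b)) ((hf _ _).2 (S.wedge_le_right a b))
    fun d hda hdb => ?_).symm
  rw [← f.apply_symm_apply d, hf] at hda hdb ⊢
  exact S.le_wedge a b _ hda hdb

lemma mul_wedge (g a b : G) : g * S.wedge a b = S.wedge (g * a) (g * b) :=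
  S.map_wedge (Equiv.mulLeft g) (fun _ _ => S.mul_le_mul_left_iff g) a b

lemma delta_zpow_mem {k : ℤ} (hk : 0 ≤ k) : S.Δ ^ k ∈ S.P := by
  lift k to ℕ using hk
  exact_mod_cast S.P.pow_mem S.delta_mem k

lemma delta_zpow_le_delta_zpow {p q : ℤ} (h : p ≤ q) : S.le (S.Δ ^ p) (S.Δ ^ q) := by
  rw [le, ← zpow_neg, ← zpow_add]
  exact S.delta_zpow_mem (by omega)

def simples : Set G := {a | a ∈ S.P ∧ a⁻¹ * S.Δ ∈ S.P}

lemma conj_delta_pow_mem (n : ℕ) {a : G} (ha : a ∈ S.P) : (S.Δ ^ n)⁻¹ * a * S.Δ ^ n ∈ S.P := by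
  induction n with
  | zero => simpa using ha
  | succ n ih => simpa [pow_succ, mul_assoc] using S.conj_pos _ ih

lemma conj_delta_pow_mem_simples (n : ℕ) {a : G} (ha : a ∈ S.simples) :
    (S.Δ ^ n)⁻¹ * a * S.Δ ^ n ∈ S.simples := by
  refine ⟨S.conj_delta_pow_mem n ha.1, ?_⟩
  have e : ((S.Δ ^ n)⁻¹ * a * S.Δ ^ n)⁻¹ * S.Δ = (S.Δ ^ n)⁻¹ * (a⁻¹ * S.Δ) * S.Δ ^ n := by group
  rw [e]
  exact S.conj_delta_pow_mem n ha.2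

lemma exists_delta_pow_mem_center : ∃ N : ℕ, 0 < N ∧ S.Δ ^ N ∈ Subgroup.center G := by
  have : Finite S.simples := S.simples_finite.to_subtype
  obtain ⟨m, n, hne, hmn⟩ := Finite.exists_ne_map_eq_of_infinite
    fun (n : ℕ) (a : S.simples) => (⟨_, S.conj_delta_pow_mem_simples n a.2⟩ : S.simples)
  wlog hlt : m < n generalizing m n
  · exact this n m hne.symm hmn.symm (by omega)
  obtain ⟨N, rfl⟩ := Nat.exists_eq_add_of_lt hlt
  refine ⟨N + 1, N.succ_pos, ?_⟩
  rw [← Subgroup.centralizer_univ, ← Subgroup.coe_top, ← S.simples_generate,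
    Subgroup.centralizer_closure, Subgroup.mem_centralizer_iff]
  intro a ha
  have h : (S.Δ ^ m)⁻¹ * a * S.Δ ^ m = (S.Δ ^ (m + (N + 1)))⁻¹ * a * S.Δ ^ (m + (N + 1)) :=
    congrArg Subtype.val (congrFun hmn ⟨a, ha⟩)
  rw [show S.Δ ^ (N + 1) = S.Δ ^ (m + (N + 1)) * (S.Δ ^ m)⁻¹ by group]
  calc a * (S.Δ ^ (m + (N + 1)) * (S.Δ ^ m)⁻¹)
      = S.Δ ^ (m + (N + 1)) * ((S.Δ ^ (m + (N + 1)))⁻¹ * a * S.Δ ^ (m + (N + 1))) *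
          (S.Δ ^ m)⁻¹ := by group
    _ = S.Δ ^ (m + (N + 1)) * (S.Δ ^ m)⁻¹ * a := by rw [← h]; group

lemma conj_delta_zpow_mem (k : ℤ) {a : G} (ha : a ∈ S.P) : (S.Δ ^ k)⁻¹ * a * S.Δ ^ k ∈ S.P := by
  obtain ⟨N, hN, hcenter⟩ := S.exists_delta_pow_mem_center
  set c := (S.Δ ^ N) ^ |k|
  have hc : c ∈ Subgroup.center G := Subgroup.zpow_mem _ hcenter _
  have e : (S.Δ ^ k)⁻¹ * a * S.Δ ^ k = (S.Δ ^ (k + N * |k|))⁻¹ * a * S.Δ ^ (k + N * |k|) := by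
    have hcomm := Subgroup.mem_center_iff.1 hc ((S.Δ ^ k)⁻¹ * a * S.Δ ^ k)
    rw [zpow_add, zpow_mul, zpow_natCast, mul_inv_rev]
    simp only [mul_assoc] at hcomm ⊢
    rw [hcomm, inv_mul_cancel_left]
  -- shifting the exponent by a multiple of `N` makes it nonnegative
  have hpos : 0 ≤ k + N * |k| := by nlinarith [neg_abs_le k, abs_nonneg k]
  lift k + N * |k| to ℕ using hpos with n
  rw [e, zpow_natCast]
  exact S.conj_delta_pow_mem n ha

lemma conj_delta_zpow_mem_iff (k : ℤ) (a : G) : (S.Δ ^ k)⁻¹ * a * S.Δ ^ k ∈ S.P ↔ a ∈ S.P := by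
  refine ⟨fun h => ?_, S.conj_delta_zpow_mem k⟩
  simpa [zpow_neg, mul_assoc] using S.conj_delta_zpow_mem (-k) h

lemma delta_zpow_le_iff_le_inf {x : G} {p : ℤ} : S.le (S.Δ ^ p) x ↔ p ≤ S.inf x :=
  ⟨S.inf_max x p, fun h => S.le_trans (S.delta_zpow_le_delta_zpow h) (S.inf_le x)⟩

lemma le_delta_zpow_iff_sup_le {x : G} {q : ℤ} : S.le x (S.Δ ^ q) ↔ S.sup x ≤ q :=
  ⟨S.sup_min x q, fun h => S.le_trans (S.le_sup x) (S.delta_zpow_le_delta_zpow h)⟩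

lemma inv_le_delta_zpow_iff {x : G} {q : ℤ} : S.le x⁻¹ (S.Δ ^ q) ↔ S.le (S.Δ ^ (-q)) x := by
  have e : (S.Δ ^ (-q))⁻¹ * (x * S.Δ ^ q) * S.Δ ^ (-q) = (S.Δ ^ (-q))⁻¹ * x := by group
  rw [le, le, inv_inv, ← S.conj_delta_zpow_mem_iff (-q), e]

lemma sup_inv (x : G) : S.sup x⁻¹ = -S.inf x :=
  eq_of_forall_ge_iff fun q => by
    rw [← S.le_delta_zpow_iff_sup_le, S.inv_le_delta_zpow_iff, S.delta_zpow_le_iff_le_inf, neg_le]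

lemma inf_inv (x : G) : S.inf x⁻¹ = -S.sup x := by
  rw [← neg_neg (S.inf x⁻¹), ← S.sup_inv, inv_inv]

structure IsGarsideAut (φ : G ≃* G) : Prop where
  map_mem_iff : ∀ a, φ a ∈ S.P ↔ a ∈ S.P
  map_delta : φ S.Δ = S.Δ

namespace IsGarsideAut

variable {S} {φ : G ≃* G}

lemma le_map_iff (hφ : S.IsGarsideAut φ) {a b : G} : S.le (φ a) (φ b) ↔ S.le a b := by
  rw [le, le, ← map_inv, ← map_mul, hφ.map_mem_iff]

lemma map_delta_zpow (hφ : S.IsGarsideAut φ) (k : ℤ) : φ (S.Δ ^ k) = S.Δ ^ k := by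
  rw [map_zpow, hφ.map_delta]

lemma map_wedge (hφ : S.IsGarsideAut φ) (a b : G) : φ (S.wedge a b) = S.wedge (φ a) (φ b) :=
  S.map_wedge φ.toEquiv (fun _ _ => hφ.le_map_iff) a b

lemma inf_map (hφ : S.IsGarsideAut φ) (x : G) : S.inf (φ x) = S.inf x :=
  eq_of_forall_le_iff fun p => by
    rw [← S.delta_zpow_le_iff_le_inf, ← S.delta_zpow_le_iff_le_inf,
      ← hφ.le_map_iff (a := S.Δ ^ p) (b := x), hφ.map_delta_zpow]

lemma sup_map (hφ : S.IsGarsideAut φ) (x : G) : S.sup (φ x) = S.sup x :=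
  eq_of_forall_ge_iff fun q => by
    rw [← S.le_delta_zpow_iff_sup_le, ← S.le_delta_zpow_iff_sup_le,
      ← hφ.le_map_iff (a := x) (b := S.Δ ^ q), hφ.map_delta_zpow]

lemma iota_map (hφ : S.IsGarsideAut φ) (x : G) : S.iota (φ x) = φ (S.iota x) := by
  rw [iota, iota, hφ.map_wedge, map_mul, hφ.map_delta_zpow, hφ.map_delta, hφ.inf_map]

lemma pp_map (hφ : S.IsGarsideAut φ) (x : G) : S.pp (φ x) = φ (S.pp x) := by
  rw [pp, pp, ← map_inv, hφ.iota_map, hφ.iota_map, hφ.map_wedge]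

end IsGarsideAut

lemma isGarsideAut_conj_delta_zpow (k : ℤ) : S.IsGarsideAut (MulAut.conj (S.Δ ^ k)⁻¹) where
  map_mem_iff a := by simpa only [MulAut.conj_apply, inv_inv] using S.conj_delta_zpow_mem_iff k a
  map_delta := by rw [MulAut.conj_apply, inv_inv]; group

lemma mul_delta_zpow_neg_inf_mem (x : G) : x * S.Δ ^ (-S.inf x) ∈ S.P := by
  have e : (S.Δ ^ (-S.inf x))⁻¹ * ((S.Δ ^ S.inf x)⁻¹ * x) * S.Δ ^ (-S.inf x)
      = x * S.Δ ^ (-S.inf x) := by group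
  rw [← e]
  exact S.conj_delta_zpow_mem _ (S.inf_le x)

lemma inv_mul_delta_zpow_sup_le (s : G) : S.le (s⁻¹ * S.Δ ^ S.sup s) (S.Δ ^ S.len s) := by
  have e : (S.Δ ^ S.len s)⁻¹ * ((S.Δ ^ S.inf s)⁻¹ * s) * S.Δ ^ S.len s
      = (s⁻¹ * S.Δ ^ S.sup s)⁻¹ * S.Δ ^ S.len s := by rw [len]; group
  rw [le, ← e]
  exact S.conj_delta_zpow_mem _ (S.inf_le s)

lemma iota_le (x : G) : S.le (S.iota x) (x * S.Δ ^ (-S.inf x)) := S.wedge_le_left _ _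

lemma iota_mem (x : G) : S.iota x ∈ S.P := S.wedge_mem (S.mul_delta_zpow_neg_inf_mem x) S.delta_mem

lemma pp_mem (x : G) : S.pp x ∈ S.P := S.wedge_mem (S.iota_mem x) (S.iota_mem x⁻¹)

lemma pp_inv (x : G) : S.pp x⁻¹ = S.pp x := by rw [pp, pp, inv_inv, S.wedge_comm]

lemma iota_le_mul_iota_conj {x α : G} (hα : α ∈ S.P) (hinf : S.inf (α⁻¹ * x * α) ≤ S.inf x) :
    S.le (S.iota x) (α * S.iota (α⁻¹ * x * α)) := by
  unfold iota
  rw [S.mul_wedge]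
  refine S.le_wedge _ _ _ (S.le_trans (S.wedge_le_left _ _) ?_)
    (S.le_trans (S.wedge_le_right _ _) ?_)
  · have e : (x * S.Δ ^ (-S.inf x))⁻¹ * (α * (α⁻¹ * x * α * S.Δ ^ (-S.inf (α⁻¹ * x * α))))
        = (S.Δ ^ (-S.inf x))⁻¹ * α * S.Δ ^ (-S.inf x) *
          S.Δ ^ (S.inf x - S.inf (α⁻¹ * x * α)) := by group
    rw [le, e]
    exact S.P.mul_mem (S.conj_delta_zpow_mem _ hα) (S.delta_zpow_mem (by omega))
  · simpa [le, mul_assoc] using S.conj_pos α hα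

lemma pp_le_mul_pp_conj {x α : G} (hα : α ∈ S.P) (hinf : S.inf (α⁻¹ * x * α) ≤ S.inf x)
    (hsup : S.sup x ≤ S.sup (α⁻¹ * x * α)) : S.le (S.pp x) (α * S.pp (α⁻¹ * x * α)) := by
  have hinv : α⁻¹ * x⁻¹ * α = (α⁻¹ * x * α)⁻¹ := by group
  have h := S.iota_le_mul_iota_conj (x := x⁻¹) hα (by rw [hinv, S.inf_inv, S.inf_inv]; omega)
  rw [hinv] at h
  rw [pp, pp, S.mul_wedge]
  exact S.le_wedge _ _ _ (S.le_trans (S.wedge_le_left _ _) (S.iota_le_mul_iota_conj hα hinf))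
    (S.le_trans (S.wedge_le_right _ _) h)

lemma inf_le_inf_sl (z : G) : S.inf z ≤ S.inf (S.sl z) := by
  apply S.inf_max
  have h : S.le (S.pp z) (z * S.Δ ^ (-S.inf z)) := S.le_trans (S.wedge_le_left _ _) (S.iota_le z)
  have e : (S.Δ ^ S.inf z)⁻¹ * S.sl z = (S.Δ ^ S.inf z)⁻¹ *
      ((S.pp z)⁻¹ * (z * S.Δ ^ (-S.inf z))) * S.Δ ^ S.inf z * S.pp z := by rw [sl]; group
  rw [e]
  exact S.P.mul_mem (S.conj_delta_zpow_mem _ h) (S.pp_mem z)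

lemma sl_inv (z : G) : S.sl z⁻¹ = (S.sl z)⁻¹ := by rw [sl, sl, S.pp_inv]; group

lemma sup_sl_le (z : G) : S.sup (S.sl z) ≤ S.sup z := by
  have h := S.inf_le_inf_sl z⁻¹
  rw [S.sl_inv, S.inf_inv, S.inf_inv] at h
  omega

lemma inf_le_inf_sl_iterate (z : G) (i : ℕ) : S.inf z ≤ S.inf (S.sl^[i] z) := by
  induction i with
  | zero => exact le_rfl
  | succ i ih => rw [Function.iterate_succ_apply']; exact ih.trans (S.inf_le_inf_sl _)

lemma sup_sl_iterate_le (z : G) (i : ℕ) : S.sup (S.sl^[i] z) ≤ S.sup z := by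
  induction i with
  | zero => exact le_rfl
  | succ i ih => rw [Function.iterate_succ_apply']; exact (S.sup_sl_le _).trans ih

lemma sl_iterate_eq_conj_PP (z : G) (i : ℕ) : S.sl^[i] z = (S.PP z i)⁻¹ * z * S.PP z i := by
  induction i with
  | zero => simp [PP]
  | succ i ih => rw [Function.iterate_succ_apply', sl, PP, ih]; group

section Rigid

variable {S} {x : G}

lemma sl_iterate_of_pp_eq_one (hx : S.pp x = 1) (i : ℕ) : S.sl^[i] x = x :=
  Function.iterate_fixed (by rw [sl, hx]; group) i

lemma itTransport_succ_of_pp_eq_one (hx : S.pp x = 1) (α : G) (i : ℕ) :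
    S.itTransport x (i + 1) α =
      S.itTransport x i α * S.pp ((S.itTransport x i α)⁻¹ * x * S.itTransport x i α) := by
  rw [itTransport, sl_iterate_of_pp_eq_one hx, transport, hx, inv_one, one_mul]

lemma itTransport_eq_mul_PP (hx : S.pp x = 1) (s : G) (i : ℕ) :
    S.itTransport x i s = s * S.PP (s⁻¹ * x * s) i := by
  induction i with
  | zero => simp [itTransport, PP]
  | succ i ih =>
    rw [itTransport_succ_of_pp_eq_one hx, ih, PP, sl_iterate_eq_conj_PP, mul_assoc]
    congr 3
    group

lemma conj_itTransport_eq_sl_iterate (hx : S.pp x = 1) (s : G) (i : ℕ) :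
    (S.itTransport x i s)⁻¹ * x * S.itTransport x i s = S.sl^[i] (s⁻¹ * x * s) := by
  rw [itTransport_eq_mul_PP hx, sl_iterate_eq_conj_PP]; group

lemma mul_pp_conj_le_of_pp_eq_one (hx : S.pp x = 1) {t : G} {k : ℤ} (ht : S.le t (S.Δ ^ k))
    (hinf : S.inf x ≤ S.inf (t⁻¹ * x * t)) (hsup : S.sup (t⁻¹ * x * t) ≤ S.sup x) :
    S.le (t * S.pp (t⁻¹ * x * t)) (S.Δ ^ k) := by
  have hφ := S.isGarsideAut_conj_delta_zpow k
  have hconj : (t⁻¹ * S.Δ ^ k)⁻¹ * (t⁻¹ * x * t) * (t⁻¹ * S.Δ ^ k) =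
      MulAut.conj (S.Δ ^ k)⁻¹ x := by simp only [MulAut.conj_apply]; group
  have h := S.pp_le_mul_pp_conj (x := t⁻¹ * x * t) ht (by rwa [hconj, hφ.inf_map])
    (by rwa [hconj, hφ.sup_map])
  rwa [hconj, hφ.pp_map, hx, map_one, mul_one, ← S.mul_le_mul_left_iff t,
    mul_inv_cancel_left] at h

lemma itTransport_le_delta_zpow_sup (hx : S.pp x = 1) {s : G}
    (h1 : S.inf (s⁻¹ * x * s) = S.inf x) (h2 : S.sup (s⁻¹ * x * s) = S.sup x) (i : ℕ) :
    S.le (S.itTransport x i s) (S.Δ ^ S.sup s) := by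
  induction i with
  | zero => exact S.le_sup s
  | succ i ih =>
    rw [itTransport_succ_of_pp_eq_one hx]
    refine mul_pp_conj_le_of_pp_eq_one hx ih ?_ ?_ <;> rw [conj_itTransport_eq_sl_iterate hx]
    · exact h1 ▸ S.inf_le_inf_sl_iterate _ i
    · exact h2 ▸ S.sup_sl_iterate_le _ i

end Rigid

end Garside

open Garside in
theorem statement18 {G : Type*} [Group G] (S : Garside G) (x s : G)
    (hx : S.pp x = 1)
    (h1 : S.inf (s⁻¹ * x * s) = S.inf x) (h2 : S.sup (s⁻¹ * x * s) = S.sup x) :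
    S.PP (s⁻¹ * x * s) 0 = 1 ∧
    (∀ i : ℕ,
      S.le (S.PP (s⁻¹ * x * s) i) (S.PP (s⁻¹ * x * s) (i + 1)) ∧
      S.le (S.PP (s⁻¹ * x * s) (i + 1)) (S.Δ ^ S.len s)) ∧
    S.itTransport x 0 s = s ∧
    (∀ i : ℕ,
      S.le (S.itTransport x i s) (S.itTransport x (i + 1) s) ∧
      S.le (S.itTransport x (i + 1) s) (S.Δ ^ S.sup s)) := by
  have hbound := itTransport_le_delta_zpow_sup hx h1 h2
  refine ⟨rfl, fun i => ⟨S.le_mul_of_mem _ (S.pp_mem _), ?_⟩, rfl, fun i => ⟨?_, hbound (i + 1)⟩⟩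
  · have hPP : S.PP (s⁻¹ * x * s) (i + 1) = s⁻¹ * S.itTransport x (i + 1) s := by
      rw [itTransport_eq_mul_PP hx, inv_mul_cancel_left]
    rw [hPP]
    exact S.le_trans ((S.mul_le_mul_left_iff s⁻¹).2 (hbound (i + 1)))
      (S.inv_mul_delta_zpow_sup_le s)
  · rw [itTransport_succ_of_pp_eq_one hx]
    exact S.le_mul_of_mem _ (S.pp_mem _)

end GarsidePaper
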